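/- arXiv:1806.00891 — 5 statements merged into one kernel-verified Lean document; each statement's English description precedes it below -/
import Mathlib

section
/- Given real numbers L_F, L_FF, L_FG, L_GG and invariants F, G, define M = L_F² + 2 L_F L_FG G - (1/2) L_F L_GG F - P G², N = 2 L_F L_FF + (1/2) L_F L_GG - P F, P = L_FF L_GG - L_FG². Then N² - 4 M P = (L_F L_GG - N)² + 4 (L_F L_FG - P G)². In particular N² - 4MP ≥ 0, so the roots σ_± = N/(2M) ± √(N²/(4M²) - P/M) are real whenever M ≠ 0. -/
open Finset

noncomputable section

/-- Minkowski metric η = diag(-1,1,1,1) (equal to its own inverse). -/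
def eta : Matrix (Fin 4) (Fin 4) ℝ :=
  Matrix.of fun a b => if a = b then (if a = 0 then (-1 : ℝ) else 1) else 0

/-- Levi-Civita symbol with ε₀₁₂₃ = 1 (Vandermonde formula). -/
def eps (a b c d : Fin 4) : ℝ :=
  (((b : ℕ) : ℝ) - ((a : ℕ) : ℝ)) * (((c : ℕ) : ℝ) - ((a : ℕ) : ℝ)) *
  (((d : ℕ) : ℝ) - ((a : ℕ) : ℝ)) * (((c : ℕ) : ℝ) - ((b : ℕ) : ℝ)) *
  (((d : ℕ) : ℝ) - ((b : ℕ) : ℝ)) * (((d : ℕ) : ℝ) - ((c : ℕ) : ℝ)) / 12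

/-- F^{ab}: both indices raised with η. -/
def raise (F : Matrix (Fin 4) (Fin 4) ℝ) : Matrix (Fin 4) (Fin 4) ℝ :=
  Matrix.of fun a b => ∑ c, ∑ d, eta a c * eta b d * F c d

/-- F_a{}^b: second index raised. -/
def mixdu (F : Matrix (Fin 4) (Fin 4) ℝ) : Matrix (Fin 4) (Fin 4) ℝ :=
  Matrix.of fun a b => ∑ c, F a c * eta c b

/-- F^a{}_b: first index raised. -/
def mixud (F : Matrix (Fin 4) (Fin 4) ℝ) : Matrix (Fin 4) (Fin 4) ℝ :=
  Matrix.of fun a b => ∑ c, eta a c * F c b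

/-- Hodge dual (⋆F)_{ab} = (1/2) ε_{abcd} F^{cd}. -/
def hodge (F : Matrix (Fin 4) (Fin 4) ℝ) : Matrix (Fin 4) (Fin 4) ℝ :=
  Matrix.of fun a b => (1 / 2) * ∑ c, ∑ d, eps a b c d * raise F c d

/-- Invariant F = (1/2) F_{ab} F^{ab}. -/
def invF (F : Matrix (Fin 4) (Fin 4) ℝ) : ℝ :=
  (1 / 2) * ∑ a, ∑ b, F a b * raise F a b

/-- Invariant G = -(1/4) F_{ab} (⋆F)^{ab}. -/
def invG (F : Matrix (Fin 4) (Fin 4) ℝ) : ℝ :=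
  -(1 / 4) * ∑ a, ∑ b, F a b * raise (hodge F) a b

/-- raise the index of a covector: p^a = η^{ab} p_b. -/
def vup (p : Fin 4 → ℝ) : Fin 4 → ℝ := fun a => ∑ b, eta a b * p b

/-- scalar contraction x_a y^a of two covectors. -/
def contra (x y : Fin 4 → ℝ) : ℝ := ∑ a, ∑ b, x a * eta a b * y b

/-- u_a = F_{ab} p^b. -/
def lower (F : Matrix (Fin 4) (Fin 4) ℝ) (p : Fin 4 → ℝ) : Fin 4 → ℝ :=
  fun a => ∑ b, F a b * vup p b

def AntisymM4 (F : Matrix (Fin 4) (Fin 4) ℝ) : Prop := ∀ a b, F a b = - F b a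

/-- optical metric g̃^{bc} = η^{bc} + σ F^{bd} F^c{}_d. -/
def gtil (F : Matrix (Fin 4) (Fin 4) ℝ) (σ : ℝ) : Matrix (Fin 4) (Fin 4) ℝ :=
  Matrix.of fun b c => eta b c + σ * ∑ d, raise F b d * mixud F c d

/-- the matrix M_b{}^d of the zeroth-order field equation. -/
def Mmat (F : Matrix (Fin 4) (Fin 4) ℝ) (p : Fin 4 → ℝ)
    (LF LFF LFG LGG : ℝ) : Matrix (Fin 4) (Fin 4) ℝ :=
  Matrix.of fun b d =>
    -2 * LF * contra p p * (if b = d then (1 : ℝ) else 0)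
    + 2 * LF * p b * vup p d
    - 4 * LFF * lower F p b * vup (lower F p) d
    + 2 * LFG * (lower F p b * vup (lower (hodge F) p) d
        + lower (hodge F) p b * vup (lower F p) d)
    - LGG * lower (hodge F) p b * vup (lower (hodge F) p) d

theorem sq_sub_eq_of_eq_add_or_sub_sqrt {x c D : ℝ} (hD : 0 ≤ D)
    (h : x = c + Real.sqrt D ∨ x = c - Real.sqrt D) : (x - c) ^ 2 = D := by
  rcases h with rfl | rfl
  · rw [add_sub_cancel_left, Real.sq_sqrt hD]
  · rw [sub_sub_cancel_left, neg_sq, Real.sq_sqrt hD]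

theorem mul_sq_sub_mul_add_eq_zero_of_sq_sub_eq {M N P σ : ℝ} (hM : M ≠ 0)
    (h : (σ - N / (2 * M)) ^ 2 = N ^ 2 / (4 * M ^ 2) - P / M) :
    M * σ ^ 2 - N * σ + P = 0 := by
  field_simp at h
  -- `h` is now `(2Mσ - N)² · 4 = 4 (N² - 4MP)`, i.e. `16 M` times the goal
  refine (mul_eq_zero.mp ?_).resolve_left (mul_ne_zero (by norm_num : (16 : ℝ) ≠ 0) hM)
  linear_combination h

theorem div_sq_sub_div_nonneg {M N P : ℝ} (hD : 0 ≤ N ^ 2 - 4 * M * P) :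
    0 ≤ N ^ 2 / (4 * M ^ 2) - P / M := by
  rcases eq_or_ne M 0 with rfl | hM
  · simp
  have hD' : N ^ 2 / (4 * M ^ 2) - P / M = (N ^ 2 - 4 * M * P) / (4 * M ^ 2) := by
    field_simp
  rw [hD']
  positivity

theorem birefringence_discriminant_eq (LF LFF LFG LGG F G : ℝ) :
    let P := LFF * LGG - LFG ^ 2
    let M := LF ^ 2 + 2 * LF * LFG * G - (1 / 2) * LF * LGG * F - P * G ^ 2
    let N := 2 * LF * LFF + (1 / 2) * LF * LGG - P * F
    N ^ 2 - 4 * M * P = (LF * LGG - N) ^ 2 + 4 * (LF * LFG - P * G) ^ 2 := by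
  intro P M N
  ring

/-- N² - 4MP = (L_F L_GG - N)² + 4 (L_F L_FG - P G)² ≥ 0, so the roots
    σ_± = N/(2M) ± √(N²/(4M²) - P/M) are real roots whenever M ≠ 0. -/
theorem stmt3 (LF LFF LFG LGG F G : ℝ) :
    let P := LFF * LGG - LFG ^ 2
    let M := LF ^ 2 + 2 * LF * LFG * G - (1 / 2) * LF * LGG * F - P * G ^ 2
    let N := 2 * LF * LFF + (1 / 2) * LF * LGG - P * F
    N ^ 2 - 4 * M * P = (LF * LGG - N) ^ 2 + 4 * (LF * LFG - P * G) ^ 2 ∧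
    0 ≤ N ^ 2 - 4 * M * P ∧
    (M ≠ 0 → ∀ σ : ℝ,
      (σ = N / (2 * M) + Real.sqrt (N ^ 2 / (4 * M ^ 2) - P / M) ∨
       σ = N / (2 * M) - Real.sqrt (N ^ 2 / (4 * M ^ 2) - P / M)) →
      M * σ ^ 2 - N * σ + P = 0) := by
  intro P M N
  have hid := birefringence_discriminant_eq LF LFF LFG LGG F G
  have hnn : 0 ≤ N ^ 2 - 4 * M * P := by rw [hid]; positivity
  refine ⟨hid, hnn, fun hM σ hσ => ?_⟩
  exact mul_sq_sub_mul_add_eq_zero_of_sq_sub_eq hM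
    (sq_sub_eq_of_eq_add_or_sub_sqrt (div_sq_sub_div_nonneg hnn) hσ)
end
end

section
/- Let F_{ab} be antisymmetric on Minkowski 4-space with invariants F, G, let σ be real, and define the optical metric g̃^{bc} = η^{bc} + σ F^{bd} F^c{}_d. Then det(g̃^{cd}) = (1 + σF - σ²G²)² det(η^{cd}) = -(1 + σF - σ²G²)². In particular, g̃ is either degenerate or of Lorentzian signature. -/
open Finset

noncomputable section

/-!
With `A = F η` (the mixed tensor `F_a{}^b`), antisymmetry of `F` gives `g̃ = η (1 - σ A²)`, so
`det g̃ = det η · det (1 - σ A²)`. Since `Aᵀ = -η A η`, the characteristic polynomial of `A` is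
even; its middle coefficient is `F` and its constant term is `det A = -det F = -G²` (the Pfaffian
of `F` is `G`). Formally, with `s² = σ`, `det (1 - σ A²) = det (1 - s A) det (1 + s A)`, which is
`(1 + σ F - σ² G²)²`; as a polynomial identity it is checked in the six components of `F`.
-/

open Matrix

theorem Matrix.det_fin_four {R : Type*} [CommRing R] (M : Matrix (Fin 4) (Fin 4) R) :
    M.det =
      M 0 0 * M 1 1 * M 2 2 * M 3 3 - M 0 0 * M 1 1 * M 2 3 * M 3 2 -
      M 0 0 * M 1 2 * M 2 1 * M 3 3 + M 0 0 * M 1 2 * M 2 3 * M 3 1 +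
      M 0 0 * M 1 3 * M 2 1 * M 3 2 - M 0 0 * M 1 3 * M 2 2 * M 3 1 -
      M 0 1 * M 1 0 * M 2 2 * M 3 3 + M 0 1 * M 1 0 * M 2 3 * M 3 2 +
      M 0 1 * M 1 2 * M 2 0 * M 3 3 - M 0 1 * M 1 2 * M 2 3 * M 3 0 -
      M 0 1 * M 1 3 * M 2 0 * M 3 2 + M 0 1 * M 1 3 * M 2 2 * M 3 0 +
      M 0 2 * M 1 0 * M 2 1 * M 3 3 - M 0 2 * M 1 0 * M 2 3 * M 3 1 -
      M 0 2 * M 1 1 * M 2 0 * M 3 3 + M 0 2 * M 1 1 * M 2 3 * M 3 0 +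
      M 0 2 * M 1 3 * M 2 0 * M 3 1 - M 0 2 * M 1 3 * M 2 1 * M 3 0 -
      M 0 3 * M 1 0 * M 2 1 * M 3 2 + M 0 3 * M 1 0 * M 2 2 * M 3 1 +
      M 0 3 * M 1 1 * M 2 0 * M 3 2 - M 0 3 * M 1 1 * M 2 2 * M 3 0 -
      M 0 3 * M 1 2 * M 2 0 * M 3 1 + M 0 3 * M 1 2 * M 2 1 * M 3 0 := by
  rw [det_succ_row_zero, Fin.sum_univ_four]
  simp only [det_fin_three, submatrix_apply]
  simp [Fin.succAbove, Fin.lt_def]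
  ring

theorem eta_eq_diagonal : eta = diagonal ![-1, 1, 1, 1] := by
  ext a b
  fin_cases a <;> fin_cases b <;> simp [eta]

theorem eta_det : eta.det = -1 := by
  simp [eta_eq_diagonal, Fin.prod_univ_four]

theorem eta_transpose : etaᵀ = eta := by
  rw [eta_eq_diagonal, diagonal_transpose]

theorem raise_eq_eta_mul_mul_eta (F : Matrix (Fin 4) (Fin 4) ℝ) : raise F = eta * F * eta := by
  ext a b
  simp only [raise, of_apply, mul_apply, Finset.sum_mul]
  rw [Finset.sum_comm]
  refine Finset.sum_congr rfl fun c _ => Finset.sum_congr rfl fun d _ => ?_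
  rw [show eta b c = eta c b by rw [← transpose_apply eta, eta_transpose]]
  ring

theorem AntisymM4.transpose_eq_neg {F : Matrix (Fin 4) (Fin 4) ℝ} (hF : AntisymM4 F) :
    Fᵀ = -F := by
  ext a b
  simp [hF b a]

theorem AntisymM4.gtil_eq_eta_mul {F : Matrix (Fin 4) (Fin 4) ℝ} (hF : AntisymM4 F) (σ : ℝ) :
    gtil F σ = eta * (1 - σ • (F * eta) ^ 2) := by
  have hg : gtil F σ = eta + σ • (raise F * (mixud F)ᵀ) := by
    ext b c
    simp [gtil, mul_apply]
  rw [hg, raise_eq_eta_mul_mul_eta, show mixud F = eta * F from rfl, transpose_mul,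
    hF.transpose_eq_neg, eta_transpose]
  simp only [sq, sub_eq_add_neg, Matrix.mul_add, mul_one, Matrix.mul_smul, Matrix.neg_mul,
    Matrix.mul_neg, smul_neg, Matrix.mul_assoc]

def antisymm4 (a b c d e f : ℝ) : Matrix (Fin 4) (Fin 4) ℝ :=
  !![0, a, b, c; -a, 0, d, e; -b, -d, 0, f; -c, -e, -f, 0]

theorem AntisymM4.eq_antisymm4 {F : Matrix (Fin 4) (Fin 4) ℝ} (hF : AntisymM4 F) :
    F = antisymm4 (F 0 1) (F 0 2) (F 0 3) (F 1 2) (F 1 3) (F 2 3) := by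
  ext i j
  fin_cases i <;> fin_cases j <;> simp [antisymm4] <;>
    linarith [hF 0 0, hF 1 1, hF 2 2, hF 3 3, hF 1 0, hF 2 0, hF 3 0, hF 2 1, hF 3 1, hF 3 2]

theorem invF_antisymm4 (a b c d e f : ℝ) :
    invF (antisymm4 a b c d e f) = -a ^ 2 - b ^ 2 - c ^ 2 + d ^ 2 + e ^ 2 + f ^ 2 := by
  simp [invF, raise, eta, antisymm4, Fin.sum_univ_four]
  ring

theorem invG_antisymm4 (a b c d e f : ℝ) :
    invG (antisymm4 a b c d e f) = a * f - b * e + c * d := by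
  simp [invG, raise, hodge, eps, eta, antisymm4, Fin.sum_univ_four]
  ring

theorem antisymm4_mul_eta (a b c d e f : ℝ) :
    antisymm4 a b c d e f * eta = !![0, a, b, c; a, 0, d, e; b, -d, 0, f; c, -e, -f, 0] := by
  ext i j
  fin_cases i <;> fin_cases j <;> simp [antisymm4, eta, mul_apply]

theorem det_one_sub_smul_sq_antisymm4_mul_eta (a b c d e f σ : ℝ) :
    (1 - σ • (antisymm4 a b c d e f * eta) ^ 2).det =
      (1 + σ * (-a ^ 2 - b ^ 2 - c ^ 2 + d ^ 2 + e ^ 2 + f ^ 2)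
        - σ ^ 2 * (a * f - b * e + c * d) ^ 2) ^ 2 := by
  rw [antisymm4_mul_eta, det_fin_four]
  simp [sq, one_apply]
  ring

theorem AntisymM4.det_one_sub_smul_sq_mul_eta {F : Matrix (Fin 4) (Fin 4) ℝ} (hF : AntisymM4 F)
    (σ : ℝ) : (1 - σ • (F * eta) ^ 2).det = (1 + σ * invF F - σ ^ 2 * invG F ^ 2) ^ 2 := by
  rw [hF.eq_antisymm4, det_one_sub_smul_sq_antisymm4_mul_eta, invF_antisymm4, invG_antisymm4]

/-- det(g̃^{cd}) = (1 + σF - σ²G²)² det(η^{cd}) = -(1 + σF - σ²G²)². -/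
theorem stmt5 (F : Matrix (Fin 4) (Fin 4) ℝ) (hF : AntisymM4 F) (σ : ℝ) :
    (gtil F σ).det = (1 + σ * invF F - σ ^ 2 * (invG F) ^ 2) ^ 2 * eta.det ∧
    (gtil F σ).det = -(1 + σ * invF F - σ ^ 2 * (invG F) ^ 2) ^ 2 := by
  have hdet : (gtil F σ).det = (1 + σ * invF F - σ ^ 2 * (invG F) ^ 2) ^ 2 * eta.det := by
    rw [hF.gtil_eq_eta_mul, det_mul, hF.det_one_sub_smul_sq_mul_eta, mul_comm]
  exact ⟨hdet, by rw [hdet, eta_det, mul_neg_one]⟩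
end
end

section
/- With M, N, P defined from L_F, L_FF, L_FG, L_GG, F, G as in the Plebański-class eikonal analysis, assume M ≠ 0 and let σ be a root of M σ² - N σ + P = 0 (i.e., σ = σ_±). Then the following are equivalent: (a) N² = 4MP; (b) L_F L_GG = N and L_F L_FG = P G; (c) D M = L_F², D N = 2 L_F² σ, and D P = L_F² σ², where D = 1 + Fσ - G²σ². -/
open Finset

noncomputable section

/-! The discriminant is a sum of two squares,
`N² - 4MP = (L_F L_GG - N)² + 4 (L_F L_FG - P G)²`, which gives (a) ⇔ (b). Under (a), σ is the
double root of `M σ² - N σ + P`, so `N = 2Mσ` and `P = Mσ²`; then `D M = M + (F/2) N - G² P`,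
which (b) reduces to `L_F²`, and the other two identities of (c) follow. Conversely (c) gives
`D² (N² - 4MP) = (DN)² - 4 (DM)(DP) = 0`. -/

section QuadraticDoubleRoot

variable {R : Type*} [CommRing R] [IsDomain R] {M N P σ : R}

theorem eq_two_mul_mul_and_eq_mul_sq_of_sq_eq_four_mul (hdisc : N ^ 2 = 4 * M * P)
    (hσ : M * σ ^ 2 - N * σ + P = 0) : N = 2 * M * σ ∧ P = M * σ ^ 2 := by
  have hsq : (2 * M * σ - N) ^ 2 = 0 := by linear_combination 4 * M * hσ + hdisc
  have hN : N = 2 * M * σ := (sub_eq_zero.mp (pow_eq_zero_iff two_ne_zero |>.mp hsq)).symm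
  exact ⟨hN, by linear_combination hσ + σ * hN⟩

theorem sq_eq_four_mul_of_mul_eq {D a : R} (hD : D ≠ 0) (hM : D * M = a)
    (hN : D * N = 2 * a * σ) (hP : D * P = a * σ ^ 2) : N ^ 2 = 4 * M * P := by
  have h : D ^ 2 * (N ^ 2 - 4 * M * P) = 0 := by
    linear_combination (D * N + 2 * a * σ) * hN - 4 * D * M * hP - 4 * a * σ ^ 2 * hM
  exact sub_eq_zero.mp ((mul_eq_zero.mp h).resolve_left (pow_ne_zero 2 hD))

end QuadraticDoubleRoot

section Plebanski

variable (LF LFF LFG LGG F G : ℝ)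

def plebanskiP (LFF LFG LGG : ℝ) : ℝ := LFF * LGG - LFG ^ 2

def plebanskiM : ℝ :=
  LF ^ 2 + 2 * LF * LFG * G - (1 / 2) * LF * LGG * F - plebanskiP LFF LFG LGG * G ^ 2

def plebanskiN : ℝ := 2 * LF * LFF + (1 / 2) * LF * LGG - plebanskiP LFF LFG LGG * F

theorem plebanskiN_sq_sub_four_mul :
    plebanskiN LF LFF LFG LGG F ^ 2 -
        4 * plebanskiM LF LFF LFG LGG F G * plebanskiP LFF LFG LGG =
      (LF * LGG - plebanskiN LF LFF LFG LGG F) * (LF * LGG - plebanskiN LF LFF LFG LGG F) +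
        (2 * (LF * LFG - plebanskiP LFF LFG LGG * G)) *
          (2 * (LF * LFG - plebanskiP LFF LFG LGG * G)) := by
  unfold plebanskiN plebanskiM plebanskiP
  ring

theorem plebanskiN_sq_eq_four_mul_iff :
    plebanskiN LF LFF LFG LGG F ^ 2 =
        4 * plebanskiM LF LFF LFG LGG F G * plebanskiP LFF LFG LGG ↔
      LF * LGG = plebanskiN LF LFF LFG LGG F ∧ LF * LFG = plebanskiP LFF LFG LGG * G := by
  rw [← sub_eq_zero, plebanskiN_sq_sub_four_mul, mul_self_add_mul_self_eq_zero]
  simp only [sub_eq_zero, mul_eq_zero, two_ne_zero, false_or]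

theorem one_add_mul_sub_mul_plebanskiM_eq_sq {σ : ℝ}
    (hN : plebanskiN LF LFF LFG LGG F = 2 * plebanskiM LF LFF LFG LGG F G * σ)
    (hP : plebanskiP LFF LFG LGG = plebanskiM LF LFF LFG LGG F G * σ ^ 2)
    (hLGG : LF * LGG = plebanskiN LF LFF LFG LGG F)
    (hLFG : LF * LFG = plebanskiP LFF LFG LGG * G) :
    (1 + F * σ - G ^ 2 * σ ^ 2) * plebanskiM LF LFF LFG LGG F G = LF ^ 2 := by
  unfold plebanskiM plebanskiN plebanskiP at *
  linear_combination -F / 2 * hN + G ^ 2 * hP + 2 * G * hLFG - F / 2 * hLGG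

end Plebanski

theorem stmt7_general (LF LFF LFG LGG F G σ : ℝ) :
    let P := LFF * LGG - LFG ^ 2
    let M := LF ^ 2 + 2 * LF * LFG * G - (1 / 2) * LF * LGG * F - P * G ^ 2
    let N := 2 * LF * LFF + (1 / 2) * LF * LGG - P * F
    let D := 1 + F * σ - G ^ 2 * σ ^ 2
    M ≠ 0 → M * σ ^ 2 - N * σ + P = 0 → D ≠ 0 →
    ((N ^ 2 = 4 * M * P ↔ (LF * LGG = N ∧ LF * LFG = P * G)) ∧
     (N ^ 2 = 4 * M * P ↔
       (D * M = LF ^ 2 ∧ D * N = 2 * LF ^ 2 * σ ∧ D * P = LF ^ 2 * σ ^ 2))) := by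
  intro P M N D _ hroot hD
  have hab : N ^ 2 = 4 * M * P ↔ LF * LGG = N ∧ LF * LFG = P * G :=
    plebanskiN_sq_eq_four_mul_iff LF LFF LFG LGG F G
  refine ⟨hab, fun hdisc => ?_, fun ⟨hM, hN, hP⟩ => sq_eq_four_mul_of_mul_eq hD hM hN hP⟩
  obtain ⟨hN, hP⟩ := eq_two_mul_mul_and_eq_mul_sq_of_sq_eq_four_mul hdisc hroot
  obtain ⟨hLGG, hLFG⟩ := hab.mp hdisc
  have hM : D * M = LF ^ 2 :=
    one_add_mul_sub_mul_plebanskiM_eq_sq LF LFF LFG LGG F G hN hP hLGG hLFG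
  exact ⟨hM, by linear_combination 2 * σ * hM + D * hN,
    by linear_combination σ ^ 2 * hM + D * hP⟩

/-- Equivalence of (a) N² = 4MP, (b) L_F L_GG = N ∧ L_F L_FG = PG,
    (c) DM = L_F², DN = 2L_F²σ, DP = L_F²σ², for σ a root of Mσ² - Nσ + P = 0. -/
theorem stmt7 (LF LFF LFG LGG F G σ : ℝ) (hLF : LF ≠ 0) :
    let P := LFF * LGG - LFG ^ 2
    let M := LF ^ 2 + 2 * LF * LFG * G - (1 / 2) * LF * LGG * F - P * G ^ 2
    let N := 2 * LF * LFF + (1 / 2) * LF * LGG - P * F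
    let D := 1 + F * σ - G ^ 2 * σ ^ 2
    M ≠ 0 → M * σ ^ 2 - N * σ + P = 0 → D ≠ 0 →
    ((N ^ 2 = 4 * M * P ↔ (LF * LGG = N ∧ LF * LFG = P * G)) ∧
     (N ^ 2 = 4 * M * P ↔
       (D * M = LF ^ 2 ∧ D * N = 2 * LF ^ 2 * σ ∧ D * P = LF ^ 2 * σ ^ 2))) :=
  stmt7_general LF LFF LFG LGG F G σ
end
end

section
/- Under the same setup, conditions (a)–(c) of the previous equivalence are also equivalent to: (d) 2 D L_FF = L_F σ (1 + F σ), D L_GG = 2 L_F σ, and D L_FG = L_F G σ², where D = 1 + Fσ - G²σ². -/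
open Finset

noncomputable section

/-!
With `X = !![x, y; y, z]`, `E = diag(1/2, 2)` and `C = !![0, 2G; G/2, -F]`, the quadratic
`Q(s) = M s² - N s + P` is `det (X - s (L E + X C))`, and `det (1 - s C) = 1 + F s - G² s²`.
Condition (d) says that this pencil vanishes at `σ`, i.e. that the symmetric matrix
`W = D X - L σ E adj(1 - σ C) = !![w/2, v; v, u]` is zero.
One finds `D Q(σ) = det W` and, up to a multiple of `det W`, `D² Q'(σ) = -L ⟪adj W, K⟫` with
`K = E adj(1 - σ C)²` symmetric, positive definite and `det K = D²`. Since the discriminant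
vanishes iff `Q'(σ) = 0`, a double root forces `det W = 0 = ⟪adj W, K⟫`, and definiteness of `K`
then forces `W = 0`.
-/

theorem sq_eq_four_mul_mul_iff_of_root {R : Type*} [CommRing R] [NoZeroDivisors R]
    {M N P σ : R} (hroot : M * σ ^ 2 - N * σ + P = 0) :
    N ^ 2 = 4 * M * P ↔ N = 2 * M * σ := by
  have hdiscrim : discrim M (-N) P = (2 * M * σ + -N) ^ 2 :=
    discrim_eq_sq_of_quadratic_eq_zero (by linear_combination hroot)
  rw [discrim] at hdiscrim
  rw [← sub_eq_zero, ← neg_sq, hdiscrim, sq_eq_zero_iff, add_neg_eq_zero, eq_comm]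

theorem binary_quadratic_eq_zero_iff {R : Type*} [CommRing R] [LinearOrder R]
    [IsStrictOrderedRing R] {a b c t r : R} (hc : 0 < c) (hdet : b ^ 2 < a * c) :
    a * t ^ 2 - 2 * b * t * r + c * r ^ 2 = 0 ↔ t = 0 ∧ r = 0 := by
  refine ⟨fun h => ?_, by rintro ⟨rfl, rfl⟩; ring⟩
  have hsos : c * (a * t ^ 2 - 2 * b * t * r + c * r ^ 2)
      = (c * r - b * t) ^ 2 + (a * c - b ^ 2) * t ^ 2 := by ring
  rw [h, mul_zero] at hsos
  obtain ⟨hlin, hsq⟩ := (add_eq_zero_iff_of_nonneg (sq_nonneg _)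
    (mul_nonneg (sub_nonneg.2 hdet.le) (sq_nonneg t))).1 hsos.symm
  have ht : t = 0 := pow_eq_zero_iff two_ne_zero |>.1 <|
    (mul_eq_zero.1 hsq).resolve_left (sub_pos.2 hdet).ne'
  subst ht
  have hcr : c * r = 0 := by simpa using hlin
  exact ⟨rfl, (mul_eq_zero.1 hcr).resolve_left hc.ne'⟩

section Pencil

variable {L x y z F G σ P M N D : ℝ}

theorem pencil_det_eq
    (hP : P = x * z - y ^ 2)
    (hM : M = L ^ 2 + 2 * L * y * G - (1 / 2) * L * z * F - P * G ^ 2)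
    (hN : N = 2 * L * x + (1 / 2) * L * z - P * F)
    (hD : D = 1 + F * σ - G ^ 2 * σ ^ 2) :
    D * (M * σ ^ 2 - N * σ + P)
      = (2 * D * x - L * σ * (1 + F * σ)) * (D * z - 2 * L * σ) / 2
        - (D * y - L * G * σ ^ 2) ^ 2 := by
  subst hP hM hN hD
  ring

theorem pencil_deriv_eq
    (hP : P = x * z - y ^ 2)
    (hM : M = L ^ 2 + 2 * L * y * G - (1 / 2) * L * z * F - P * G ^ 2)
    (hN : N = 2 * L * x + (1 / 2) * L * z - P * F)
    (hD : D = 1 + F * σ - G ^ 2 * σ ^ 2) :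
    D ^ 2 * (2 * M * σ - N)
      = (F - 2 * G ^ 2 * σ) * ((2 * D * x - L * σ * (1 + F * σ)) * (D * z - 2 * L * σ) / 2
          - (D * y - L * G * σ ^ 2) ^ 2)
        - L * (((1 + F * σ) ^ 2 + G ^ 2 * σ ^ 2) / 2 * (D * z - 2 * L * σ)
          - 2 * (G * σ * (2 + F * σ)) * (D * y - L * G * σ ^ 2)
          + (1 + G ^ 2 * σ ^ 2) * (2 * D * x - L * σ * (1 + F * σ))) := by
  subst hP hM hN hD
  ring

theorem two_mul_mul_eq_iff_of_root
    (hP : P = x * z - y ^ 2)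
    (hM : M = L ^ 2 + 2 * L * y * G - (1 / 2) * L * z * F - P * G ^ 2)
    (hN : N = 2 * L * x + (1 / 2) * L * z - P * F)
    (hD : D = 1 + F * σ - G ^ 2 * σ ^ 2)
    (hL : L ≠ 0) (hD0 : D ≠ 0) (hroot : M * σ ^ 2 - N * σ + P = 0) :
    N = 2 * M * σ ↔
      (2 * D * x = L * σ * (1 + F * σ) ∧ D * z = 2 * L * σ ∧ D * y = L * G * σ ^ 2) := by
  have hdet := pencil_det_eq hP hM hN hD
  have hderiv := pencil_deriv_eq hP hM hN hD
  set w := 2 * D * x - L * σ * (1 + F * σ)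
  set u := D * z - 2 * L * σ
  set v := D * y - L * G * σ ^ 2
  rw [hroot, mul_zero] at hdet
  constructor
  · intro hN'
    rw [hN', sub_self, mul_zero, ← hdet, mul_zero, zero_sub, zero_eq_neg] at hderiv
    have hlin : ((1 + F * σ) ^ 2 + G ^ 2 * σ ^ 2) / 2 * u - 2 * (G * σ * (2 + F * σ)) * v
        + (1 + G ^ 2 * σ ^ 2) * w = 0 := (mul_eq_zero.1 hderiv).resolve_left hL
    -- `w u = 2 v²` turns `u * hlin` into the quadratic form of `K` at `(u, v)`
    have hform : ((1 + F * σ) ^ 2 + G ^ 2 * σ ^ 2) / 2 * u ^ 2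
        - 2 * (G * σ * (2 + F * σ)) * u * v + 2 * (1 + G ^ 2 * σ ^ 2) * v ^ 2 = 0 := by
      linear_combination u * hlin + 2 * (1 + G ^ 2 * σ ^ 2) * hdet
    have hKdet : ((1 + F * σ) ^ 2 + G ^ 2 * σ ^ 2) / 2 * (2 * (1 + G ^ 2 * σ ^ 2))
        - (G * σ * (2 + F * σ)) ^ 2 = D ^ 2 := by
      rw [hD]; ring
    obtain ⟨hu, hv⟩ := (binary_quadratic_eq_zero_iff (by positivity)
      (sub_pos.1 (hKdet ▸ pow_two_pos_of_ne_zero hD0))).1 hform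
    rw [hu, hv] at hlin
    have hw : w = 0 := (mul_eq_zero.1 (by simpa using hlin)).resolve_left (by positivity)
    exact ⟨sub_eq_zero.1 hw, sub_eq_zero.1 hu, sub_eq_zero.1 hv⟩
  · rintro ⟨hw, hu, hv⟩
    have hw' : w = 0 := sub_eq_zero.2 hw
    have hu' : u = 0 := sub_eq_zero.2 hu
    have hv' : v = 0 := sub_eq_zero.2 hv
    have h2 : D ^ 2 * (2 * M * σ - N) = 0 := by
      rw [hderiv, hw', hu', hv']
      ring
    exact (sub_eq_zero.1 ((mul_eq_zero.1 h2).resolve_left (pow_ne_zero 2 hD0))).symm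

end Pencil

/-- (a) N² = 4MP is also equivalent to (d): 2D L_FF = L_F σ(1+Fσ),
    D L_GG = 2 L_F σ and D L_FG = L_F G σ². -/
theorem stmt8 (LF LFF LFG LGG F G σ : ℝ) (hLF : LF ≠ 0) :
    let P := LFF * LGG - LFG ^ 2
    let M := LF ^ 2 + 2 * LF * LFG * G - (1 / 2) * LF * LGG * F - P * G ^ 2
    let N := 2 * LF * LFF + (1 / 2) * LF * LGG - P * F
    let D := 1 + F * σ - G ^ 2 * σ ^ 2
    M ≠ 0 → M * σ ^ 2 - N * σ + P = 0 → D ≠ 0 →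
    (N ^ 2 = 4 * M * P ↔
      (2 * D * LFF = LF * σ * (1 + F * σ) ∧
       D * LGG = 2 * LF * σ ∧
       D * LFG = LF * G * σ ^ 2)) := by
  intro P M N D _ hroot hD
  rw [sq_eq_four_mul_mul_iff_of_root hroot]
  exact two_mul_mul_eq_iff_of_root rfl rfl rfl rfl hLF hD hroot
end
end

section
/- For the Born-Infeld Lagrangian L(F,G) = b₀² - b₀² √(1 + F/b₀² - G²/b₀⁴), with M, N, P the standard quadratic combinations of its partial derivatives, one has N² = 4MP and the unique root of Mσ² - Nσ + P = 0 is σ = -1/(b₀² + F). Hence the two optical metrics coincide: g̃^{ab} = η^{ab} - F^{ac}F^b{}_c/(b₀² + F). -/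
open Finset

noncomputable section

/-- The Born-Infeld Lagrangian L(F,G) = b₀² - b₀²√(1 + F/b₀² - G²/b₀⁴). -/
def BIL (b0 F G : ℝ) : ℝ :=
  b0 ^ 2 - b0 ^ 2 * Real.sqrt (1 + F / b0 ^ 2 - G ^ 2 / b0 ^ 4)

/-!
Write `W = 1 + F/b₀² - G²/b₀⁴` and `s = √W`. Differentiating `L = b₀² - b₀² s` gives
`L_F = -1/(2s)`, `L_FF = 1/(4b₀²s³)`, `L_FG = -G/(2b₀⁴s³)`, `L_GG = 1/(b₀²s) + G²/(b₀⁶s³)`, and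
eliminating `F` through `s² = W` collapses the coefficients to `M = (b₀² + F)² P` and
`N = -2(b₀² + F) P`. So the quadratic is `P((b₀² + F)σ + 1)²`: its discriminant vanishes and
its double root is `-1/(b₀² + F)`.
-/

open Filter Topology

theorem mul_add_one_sq_eq_zero_iff {K : Type*} [Field K] {c p x : K} (hc : c ≠ 0) (hp : p ≠ 0) :
    p * (c * x + 1) ^ 2 = 0 ↔ x = -1 / c := by
  rw [mul_eq_zero, or_iff_right hp, pow_eq_zero_iff two_ne_zero, eq_div_iff hc]
  constructor <;> intro h <;> linear_combination h

theorem HasDerivAt.inv_sqrt {f : ℝ → ℝ} {f' x : ℝ} (hf : HasDerivAt f f' x) (hx : 0 < f x) :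
    HasDerivAt (fun y => (√(f y))⁻¹) (-f' / (2 * √(f x) ^ 3)) x := by
  have hs : 0 < √(f x) := Real.sqrt_pos.2 hx
  refine ((hf.sqrt hx.ne').inv hs.ne').congr_deriv ?_
  field_simp

def BIradicand (b0 F G : ℝ) : ℝ := 1 + F / b0 ^ 2 - G ^ 2 / b0 ^ 4

theorem BIL_eq_sub_mul_sqrt (b0 F G : ℝ) :
    BIL b0 F G = b0 ^ 2 - b0 ^ 2 * √(BIradicand b0 F G) :=
  rfl

theorem hasDerivAt_BIradicand_fst (b0 G x : ℝ) :
    HasDerivAt (fun x => BIradicand b0 x G) (1 / b0 ^ 2) x := by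
  unfold BIradicand
  simpa using (((hasDerivAt_id x).div_const (b0 ^ 2)).const_add 1).sub_const (G ^ 2 / b0 ^ 4)

theorem hasDerivAt_BIradicand_snd (b0 F y : ℝ) :
    HasDerivAt (fun y => BIradicand b0 F y) (-(2 * y / b0 ^ 4)) y := by
  unfold BIradicand
  refine (((hasDerivAt_pow 2 y).div_const (b0 ^ 4)).const_sub (1 + F / b0 ^ 2)).congr_deriv ?_
  push_cast
  ring

section BornInfeld

variable {b0 : ℝ}

theorem eventually_pos_BIradicand_fst {F G : ℝ} (h : 0 < BIradicand b0 F G) :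
    ∀ᶠ x in 𝓝 F, 0 < BIradicand b0 x G :=
  (hasDerivAt_BIradicand_fst b0 G F).continuousAt.eventually_const_lt h

theorem eventually_pos_BIradicand_snd {F G : ℝ} (h : 0 < BIradicand b0 F G) :
    ∀ᶠ y in 𝓝 G, 0 < BIradicand b0 F y :=
  (hasDerivAt_BIradicand_snd b0 F G).continuousAt.eventually_const_lt h

theorem hasDerivAt_BIL_fst (hb : b0 ≠ 0) {x y : ℝ} (h : 0 < BIradicand b0 x y) :
    HasDerivAt (fun x => BIL b0 x y) (-(1 / 2) * (√(BIradicand b0 x y))⁻¹) x := by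
  simp only [BIL_eq_sub_mul_sqrt]
  refine ((((hasDerivAt_BIradicand_fst b0 y x).sqrt h.ne').const_mul (b0 ^ 2)).const_sub
    (b0 ^ 2)).congr_deriv ?_
  field_simp

theorem hasDerivAt_BIL_snd (hb : b0 ≠ 0) {x y : ℝ} (h : 0 < BIradicand b0 x y) :
    HasDerivAt (fun y => BIL b0 x y) (y / b0 ^ 2 * (√(BIradicand b0 x y))⁻¹) y := by
  simp only [BIL_eq_sub_mul_sqrt]
  refine ((((hasDerivAt_BIradicand_snd b0 x y).sqrt h.ne').const_mul (b0 ^ 2)).const_sub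
    (b0 ^ 2)).congr_deriv ?_
  field_simp

theorem deriv_deriv_BIL_fst_fst (hb : b0 ≠ 0) {F G : ℝ} (h : 0 < BIradicand b0 F G) :
    deriv (fun x => deriv (fun x' => BIL b0 x' G) x) F =
      1 / (4 * b0 ^ 2 * √(BIradicand b0 F G) ^ 3) := by
  have hL_F : (fun x => deriv (fun x' => BIL b0 x' G) x) =ᶠ[𝓝 F]
      fun x => -(1 / 2) * (√(BIradicand b0 x G))⁻¹ := by
    filter_upwards [eventually_pos_BIradicand_fst h] with x hx
    exact (hasDerivAt_BIL_fst hb hx).deriv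
  rw [hL_F.deriv_eq, (((hasDerivAt_BIradicand_fst b0 G F).inv_sqrt h).const_mul _).deriv]
  field_simp
  norm_num

theorem deriv_deriv_BIL_fst_snd (hb : b0 ≠ 0) {F G : ℝ} (h : 0 < BIradicand b0 F G) :
    deriv (fun y => deriv (fun x => BIL b0 x y) F) G =
      -(G / (2 * b0 ^ 4 * √(BIradicand b0 F G) ^ 3)) := by
  have hL_F : (fun y => deriv (fun x => BIL b0 x y) F) =ᶠ[𝓝 G]
      fun y => -(1 / 2) * (√(BIradicand b0 F y))⁻¹ := by
    filter_upwards [eventually_pos_BIradicand_snd h] with y hy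
    exact (hasDerivAt_BIL_fst hb hy).deriv
  rw [hL_F.deriv_eq, (((hasDerivAt_BIradicand_snd b0 F G).inv_sqrt h).const_mul _).deriv]
  field_simp

theorem deriv_deriv_BIL_snd_snd (hb : b0 ≠ 0) {F G : ℝ} (h : 0 < BIradicand b0 F G) :
    deriv (fun y => deriv (fun y' => BIL b0 F y') y) G =
      1 / (b0 ^ 2 * √(BIradicand b0 F G)) + G ^ 2 / (b0 ^ 6 * √(BIradicand b0 F G) ^ 3) := by
  have hL_G : (fun y => deriv (fun y' => BIL b0 F y') y) =ᶠ[𝓝 G]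
      fun y => y / b0 ^ 2 * (√(BIradicand b0 F y))⁻¹ := by
    filter_upwards [eventually_pos_BIradicand_snd h] with y hy
    exact (hasDerivAt_BIL_snd hb hy).deriv
  have hd : HasDerivAt (fun y => y / b0 ^ 2 * (√(BIradicand b0 F y))⁻¹) _ G :=
    ((hasDerivAt_id' G).div_const (b0 ^ 2)).mul ((hasDerivAt_BIradicand_snd b0 F G).inv_sqrt h)
  rw [hL_G.deriv_eq, hd.deriv]
  field_simp

end BornInfeld

theorem BIL_coefficients {b0 F G s LF LFF LFG LGG : ℝ} (hb : b0 ≠ 0) (hs : s ≠ 0)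
    (hs2 : s ^ 2 = BIradicand b0 F G) (hLF : LF = -(1 / 2) * s⁻¹)
    (hLFF : LFF = 1 / (4 * b0 ^ 2 * s ^ 3)) (hLFG : LFG = -(G / (2 * b0 ^ 4 * s ^ 3)))
    (hLGG : LGG = 1 / (b0 ^ 2 * s) + G ^ 2 / (b0 ^ 6 * s ^ 3)) :
    let P := LFF * LGG - LFG ^ 2
    LF ^ 2 + 2 * LF * LFG * G - (1 / 2) * LF * LGG * F - P * G ^ 2 = (b0 ^ 2 + F) ^ 2 * P ∧
      2 * LF * LFF + (1 / 2) * LF * LGG - P * F = -(2 * (b0 ^ 2 + F) * P) := by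
  have hF : F = b0 ^ 2 * s ^ 2 + G ^ 2 / b0 ^ 2 - b0 ^ 2 := by
    rw [hs2, BIradicand]
    field_simp
    ring
  subst hF hLF hLFF hLFG hLGG
  constructor <;> field_simp <;> ring

theorem stmt15_general (b0 F G : ℝ) (hb : 0 < b0)
    (hW : 0 < 1 + F / b0 ^ 2 - G ^ 2 / b0 ^ 4) :
    let LF := deriv (fun x => BIL b0 x G) F
    let LFF := deriv (fun x => deriv (fun x' => BIL b0 x' G) x) F
    let LFG := deriv (fun y => deriv (fun x => BIL b0 x y) F) G
    let LGG := deriv (fun y => deriv (fun y' => BIL b0 F y') y) G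
    let P := LFF * LGG - LFG ^ 2
    let M := LF ^ 2 + 2 * LF * LFG * G - (1 / 2) * LF * LGG * F - P * G ^ 2
    let N := 2 * LF * LFF + (1 / 2) * LF * LGG - P * F
    M ≠ 0 →
    (N ^ 2 = 4 * M * P ∧
     M * (-1 / (b0 ^ 2 + F)) ^ 2 - N * (-1 / (b0 ^ 2 + F)) + P = 0 ∧
     (∀ σ : ℝ, M * σ ^ 2 - N * σ + P = 0 → σ = -1 / (b0 ^ 2 + F)) ∧
     (∀ Fab : Matrix (Fin 4) (Fin 4) ℝ, ∀ a b : Fin 4,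
        gtil Fab (-1 / (b0 ^ 2 + F)) a b =
          eta a b - (∑ d, raise Fab a d * mixud Fab b d) / (b0 ^ 2 + F))) := by
  intro LF LFF LFG LGG P M N hM0
  obtain ⟨hM, hN⟩ : M = (b0 ^ 2 + F) ^ 2 * P ∧ N = -(2 * (b0 ^ 2 + F) * P) :=
    BIL_coefficients hb.ne' (Real.sqrt_pos.2 hW).ne' (Real.sq_sqrt hW.le)
      (hasDerivAt_BIL_fst hb.ne' hW).deriv (deriv_deriv_BIL_fst_fst hb.ne' hW)
      (deriv_deriv_BIL_fst_snd hb.ne' hW) (deriv_deriv_BIL_snd_snd hb.ne' hW)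
  have hc : b0 ^ 2 + F ≠ 0 := fun h => hM0 (by rw [hM, h]; ring)
  have hP : P ≠ 0 := fun h => hM0 (by rw [hM, h, mul_zero])
  have hroot (σ : ℝ) : M * σ ^ 2 - N * σ + P = 0 ↔ σ = -1 / (b0 ^ 2 + F) := by
    rw [← mul_add_one_sq_eq_zero_iff hc hP, hM, hN]
    ring_nf
  refine ⟨by rw [hM, hN]; ring, (hroot _).2 rfl, fun σ => (hroot σ).1, fun Fab a b => ?_⟩
  simp only [gtil, Matrix.of_apply]
  ring

/-- For the Born-Infeld Lagrangian, N² = 4MP and the unique root of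
    Mσ² - Nσ + P = 0 is σ = -1/(b₀² + F); hence the two optical metrics
    coincide and equal η^{ab} - F^{ac}F^b{}_c/(b₀² + F). -/
theorem stmt15 (b0 F G : ℝ) (hb : 0 < b0)
    (hW : 0 < 1 + F / b0 ^ 2 - G ^ 2 / b0 ^ 4) (hbF : b0 ^ 2 + F ≠ 0) :
    let LF := deriv (fun x => BIL b0 x G) F
    let LFF := deriv (fun x => deriv (fun x' => BIL b0 x' G) x) F
    let LFG := deriv (fun y => deriv (fun x => BIL b0 x y) F) G
    let LGG := deriv (fun y => deriv (fun y' => BIL b0 F y') y) G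
    let P := LFF * LGG - LFG ^ 2
    let M := LF ^ 2 + 2 * LF * LFG * G - (1 / 2) * LF * LGG * F - P * G ^ 2
    let N := 2 * LF * LFF + (1 / 2) * LF * LGG - P * F
    M ≠ 0 →
    (N ^ 2 = 4 * M * P ∧
     M * (-1 / (b0 ^ 2 + F)) ^ 2 - N * (-1 / (b0 ^ 2 + F)) + P = 0 ∧
     (∀ σ : ℝ, M * σ ^ 2 - N * σ + P = 0 → σ = -1 / (b0 ^ 2 + F)) ∧
     (∀ Fab : Matrix (Fin 4) (Fin 4) ℝ, ∀ a b : Fin 4,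
        gtil Fab (-1 / (b0 ^ 2 + F)) a b =
          eta a b - (∑ d, raise Fab a d * mixud Fab b d) / (b0 ^ 2 + F))) :=
  stmt15_general b0 F G hb hW
end
end
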